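/- (Theorem 5.) Let q be real with 0 < q < 1, α ≥ 1 an integer, d an odd positive integer, χ a Dirichlet character modulo d, F an odd positive integer divisible by d, 0 ≤ a < F an integer, x > 0 real, and s ∈ ℂ. Then H_q^χ(s : x : a : F | α) = ( [2:q] q^a (−1)^a χ(a) / ( [2:q^F] · [F:q^α]^s ) ) · ζ̃_{E,q^F}( s, (x+a)/F | α ). -/

import Mathlib

open scoped BigOperators

/-- `[x:q] = (q^x - 1)/(q - 1)` with real exponentiation. -/
noncomputable def qNum (q x : ℝ) : ℝ := (q ^ x - 1) / (q - 1)

/-- Weighted `q`-Euler Hurwitz zeta function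
`ζ̃_{E,q}(s,y|α) = [2:q] ∑_{m≥0} (-1)^m q^m [m+y:q^α]^{-s}`. -/
noncomputable def qHurwitzZeta (q : ℝ) (α : ℕ) (s : ℂ) (y : ℝ) : ℂ :=
  (qNum q 2 : ℂ) *
    ∑' m : ℕ, (-1 : ℂ) ^ m * (q : ℂ) ^ m *
      ((qNum (q ^ α) ((m : ℝ) + y) : ℝ) : ℂ) ^ (-s)

/-- Partial Dirichlet-type zeta function
`H_q^χ(s : x : a : F | α) = [2:q] ∑_{m ≡ a (mod F)} q^m χ(m) (-1)^m [x+m:q^α]^{-s}`,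
the sum over `m ≥ 0` with `m ≡ a (mod F)` being parametrized by `m = a + F j`, `j ≥ 0`. -/
noncomputable def qPartialZeta (q : ℝ) (d : ℕ) (χ : DirichletCharacter ℂ d) (α : ℕ)
    (s : ℂ) (x : ℝ) (a F : ℕ) : ℂ :=
  (qNum q 2 : ℂ) *
    ∑' j : ℕ, (q : ℂ) ^ (a + F * j) * χ ((a + F * j : ℕ) : ZMod d) * (-1 : ℂ) ^ (a + F * j) *
      ((qNum (q ^ α) (x + ((a + F * j : ℕ) : ℝ)) : ℝ) : ℂ) ^ (-s)

/-!
Writing `m = a + F j`, one has `χ(m) = χ(a)`, `(-1)^m = (-1)^a (-1)^j` because `F` is odd, and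
`[x + m : q^α] = [F : q^α] · [j + (x + a)/F : (q^F)^α]`, an instance of
`[y : Q] = [F : Q] · [y/F : Q^F]`. Hence the series defining `H` is,
term by term, a constant multiple of the one defining `ζ̃_{E,q^F}(s, (x+a)/F | α)`.
-/

lemma qNum_pos {q y : ℝ} (hq0 : 0 < q) (hq1 : q < 1) (hy : 0 < y) : 0 < qNum q y :=
  div_pos_of_neg_of_neg (by linarith [Real.rpow_lt_one hq0.le hq1 hy]) (by linarith)

lemma qNum_mul_qNum_pow {q : ℝ} (hq0 : 0 < q) (hq1 : q ≠ 1) {F : ℕ} (hF : F ≠ 0) (y : ℝ) :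
    qNum q F * qNum (q ^ F) (y / F) = qNum q y := by
  have hqF : q ^ F - 1 ≠ 0 :=
    sub_ne_zero.mpr fun h => hq1 ((pow_eq_one_iff_of_nonneg hq0.le hF).mp h)
  have hrpow : (q ^ F : ℝ) ^ (y / F) = q ^ y := by
    rw [← Real.rpow_natCast, ← Real.rpow_mul hq0.le, mul_div_cancel₀ _ (by exact_mod_cast hF)]
  rw [qNum, qNum, qNum, hrpow, Real.rpow_natCast, div_mul_div_comm, mul_comm (q - 1),
    mul_div_mul_left _ _ hqF]

lemma qNum_pow_add_mul {q : ℝ} (hq0 : 0 < q) (hq1 : q < 1) {α F : ℕ} (hα : α ≠ 0)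
    (hF : F ≠ 0) (x : ℝ) (a j : ℕ) :
    qNum (q ^ α) (x + ((a + F * j : ℕ) : ℝ)) =
      qNum (q ^ α) F * qNum ((q ^ F) ^ α) ((j : ℝ) + (x + a) / F) := by
  have hQ1 : q ^ α ≠ 1 := (pow_lt_one₀ hq0.le hq1 hα).ne
  rw [← pow_mul, mul_comm F α, pow_mul,
    ← qNum_mul_qNum_pow (pow_pos hq0 α) hQ1 hF (x + ((a + F * j : ℕ) : ℝ))]
  congr 2
  have hF' : (F : ℝ) ≠ 0 := by exact_mod_cast hF
  push_cast
  field_simp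
  ring

lemma DirichletCharacter.apply_add_mul_of_dvd {R : Type*} [CommMonoidWithZero R] {d F : ℕ}
    (χ : DirichletCharacter R d) (hdF : d ∣ F) (a j : ℕ) : χ ((a + F * j : ℕ) : ZMod d) = χ a := by
  rw [Nat.cast_add, Nat.cast_mul, (ZMod.natCast_eq_zero_iff F d).mpr hdF, zero_mul, add_zero]

lemma qPartialZeta_term_eq {q : ℝ} (hq0 : 0 < q) (hq1 : q < 1) {α : ℕ} (hα : α ≠ 0)
    {d : ℕ} (χ : DirichletCharacter ℂ d) {F : ℕ} (hF0 : F ≠ 0) (hFo : Odd F) (hdF : d ∣ F)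
    (a : ℕ) {x : ℝ} (hx : 0 < x) (s : ℂ) (j : ℕ) :
    (q : ℂ) ^ (a + F * j) * χ ((a + F * j : ℕ) : ZMod d) * (-1 : ℂ) ^ (a + F * j) *
        ((qNum (q ^ α) (x + ((a + F * j : ℕ) : ℝ)) : ℝ) : ℂ) ^ (-s) =
      (q : ℂ) ^ a * (-1 : ℂ) ^ a * χ (a : ZMod d) / ((qNum (q ^ α) F : ℝ) : ℂ) ^ s *
        ((-1 : ℂ) ^ j * ((q ^ F : ℝ) : ℂ) ^ j *
          ((qNum ((q ^ F) ^ α) ((j : ℝ) + (x + a) / F) : ℝ) : ℂ) ^ (-s)) := by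
  have hqF : 0 < q ^ F := pow_pos hq0 F
  have hfactor₁ : 0 ≤ qNum (q ^ α) F :=
    (qNum_pos (pow_pos hq0 α) (pow_lt_one₀ hq0.le hq1 hα) (by positivity)).le
  have hfactor₂ : 0 ≤ qNum ((q ^ F) ^ α) ((j : ℝ) + (x + a) / F) :=
    (qNum_pos (pow_pos hqF α) (pow_lt_one₀ hqF.le (pow_lt_one₀ hq0.le hq1 hF0) hα)
      (by positivity)).le
  have hsign : (-1 : ℂ) ^ (a + F * j) = (-1) ^ a * (-1) ^ j := by
    rw [pow_add, pow_mul, hFo.neg_one_pow]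
  rw [χ.apply_add_mul_of_dvd hdF, hsign, qNum_pow_add_mul hq0 hq1 hα hF0, Complex.ofReal_mul,
    Complex.mul_cpow_ofReal_nonneg hfactor₁ hfactor₂, Complex.cpow_neg _ s, Complex.ofReal_pow,
    pow_add, pow_mul]
  ring

theorem statement10_general (q : ℝ) (hq0 : 0 < q) (hq1 : q < 1) (α : ℕ) (hα : 1 ≤ α)
    (d : ℕ) (χ : DirichletCharacter ℂ d)
    (F : ℕ) (hF0 : 0 < F) (hFo : Odd F) (hdF : d ∣ F)
    (a : ℕ) (x : ℝ) (hx : 0 < x) (s : ℂ) :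
    qPartialZeta q d χ α s x a F =
      ((qNum q 2 : ℝ) : ℂ) * (q : ℂ) ^ a * (-1 : ℂ) ^ a * χ (a : ZMod d) /
          (((qNum (q ^ F) 2 : ℝ) : ℂ) * ((qNum (q ^ α) F : ℝ) : ℂ) ^ s) *
        qHurwitzZeta (q ^ F) α s ((x + a) / F) := by
  have hC : ((qNum (q ^ F) 2 : ℝ) : ℂ) ≠ 0 := Complex.ofReal_ne_zero.mpr
    (qNum_pos (pow_pos hq0 F) (pow_lt_one₀ hq0.le hq1 hF0.ne') two_pos).ne'
  rw [qPartialZeta, qHurwitzZeta,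
    tsum_congr (qPartialZeta_term_eq hq0 hq1 (by omega) χ hF0.ne' hFo hdF a hx s), tsum_mul_left]
  generalize (∑' j : ℕ, _ : ℂ) = T
  field_simp

theorem statement10 (q : ℝ) (hq0 : 0 < q) (hq1 : q < 1) (α : ℕ) (hα : 1 ≤ α)
    (d : ℕ) (hd0 : 0 < d) (hdo : Odd d) (χ : DirichletCharacter ℂ d)
    (F : ℕ) (hF0 : 0 < F) (hFo : Odd F) (hdF : d ∣ F)
    (a : ℕ) (ha : a < F) (x : ℝ) (hx : 0 < x) (s : ℂ) :
    qPartialZeta q d χ α s x a F =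
      ((qNum q 2 : ℝ) : ℂ) * (q : ℂ) ^ a * (-1 : ℂ) ^ a * χ (a : ZMod d) /
          (((qNum (q ^ F) 2 : ℝ) : ℂ) * ((qNum (q ^ α) F : ℝ) : ℂ) ^ s) *
        qHurwitzZeta (q ^ F) α s ((x + a) / F) :=
  statement10_general q hq0 hq1 α hα d χ F hF0 hFo hdF a x hx s
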